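/- arXiv:1510.06378 — 5 statements merged into one kernel-verified Lean document; each statement's English description precedes it below -/
import Mathlib

section
/- Let s, y ∈ R^n and let B0, H0 be symmetric positive definite with H0 = B0^{-1}. Fix φ ∈ [0,1], assume s^T y > 0, set Δ0 = (1-φ)(y^T s)^2 + φ (y^T H0 y)(s^T B0 s) and Φ0 = (1-φ)(s^T y)^2 / Δ0, and define α̃ = 1/(s^T y) + Φ0 (y^T H0 y)/(s^T y)^2, β̃ = -Φ0/(y^T s), δ̃ = -(1-Φ0)/(y^T H0 y). Then Δ0 > 0 and the determinant α̃ δ̃ - β̃² equals (1/Δ0)(s^T B0 s)/λ0, where λ0 = 1/(-(1-φ)/(s^T B0 s) - φ/(s^T y)). -/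
/-! Since `sᵀy > 0`, both `s` and `y` are nonzero, so positive definiteness makes `sᵀB₀s` and
`yᵀH₀y` positive; `Δ₀` is a convex combination of two positive numbers. The determinant
formula is then a rational identity in `sᵀy`, `sᵀB₀s`, `yᵀH₀y` and `φ`. -/

open Matrix

theorem Matrix.PosDef.transpose_mul_mul_col_pos {ι : Type*} [Fintype ι] {A : Matrix ι ι ℝ}
    (hA : A.PosDef) {x : Matrix ι (Fin 1) ℝ} (hx : x ≠ 0) : 0 < (xᵀ * A * x) 0 0 := by
  have hcol : (fun i => x i 0) ≠ 0 := fun h =>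
    hx (Matrix.ext fun i j => by simpa [Fin.fin_one_eq_zero j] using congrFun h i)
  have hquad : (xᵀ * A * x) 0 0 = (fun i => x i 0) ⬝ᵥ A *ᵥ fun i => x i 0 := by
    rw [Matrix.mul_assoc, Matrix.mul_apply]
    rfl
  simpa [hquad] using hA.dotProduct_mulVec_pos hcol

theorem broyden_middle_det_eq {K : Type*} [Field K] {φ sty sBs yHy Δ : K} (hsty : sty ≠ 0)
    (hsBs : sBs ≠ 0) (hyHy : yHy ≠ 0) (hΔ : Δ = (1 - φ) * sty ^ 2 + φ * yHy * sBs) (hΔ0 : Δ ≠ 0) :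
    let Φ := (1 - φ) * sty ^ 2 / Δ
    (1 / sty + Φ * yHy / sty ^ 2) * -((1 - Φ) / yHy) - (-(Φ / sty)) ^ 2
      = 1 / Δ * (sBs / (1 / (-((1 - φ) / sBs) - φ / sty))) := by
  intro Φ
  simp only [Φ]
  field_simp
  subst hΔ
  ring

theorem lemma1_det_general (n : ℕ)
    (B0 H0 : Matrix (Fin n) (Fin n) ℝ)
    (hB0 : B0.PosDef) (hH0 : H0.PosDef)
    (s y : Matrix (Fin n) (Fin 1) ℝ)
    (φ : ℝ) (hφ : φ ∈ Set.Icc (0 : ℝ) 1)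
    (hsy : (sᵀ * y) 0 0 > 0) :
    let sty := (sᵀ * y) 0 0
    let sBs := (sᵀ * B0 * s) 0 0
    let yHy := (yᵀ * H0 * y) 0 0
    let Δ0 := (1 - φ) * sty ^ 2 + φ * yHy * sBs
    let Φ0 := (1 - φ) * sty ^ 2 / Δ0
    let α := 1 / sty + Φ0 * yHy / sty ^ 2
    let β := -(Φ0 / sty)
    let δ := -((1 - Φ0) / yHy)
    let lam0 := 1 / (-((1 - φ) / sBs) - φ / sty)
    Δ0 > 0 ∧ α * δ - β ^ 2 = (1 / Δ0) * (sBs / lam0) := by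
  intro sty sBs yHy Δ0 Φ0 α β δ lam0
  have hs : s ≠ 0 := by
    rintro rfl
    simp at hsy
  have hy : y ≠ 0 := by
    rintro rfl
    simp at hsy
  have hsBs : 0 < sBs := hB0.transpose_mul_mul_col_pos hs
  have hyHy : 0 < yHy := hH0.transpose_mul_mul_col_pos hy
  have hΔ0 : 0 < Δ0 := by
    simpa [Δ0, mul_assoc] using
      convex_Ioi (0 : ℝ) (pow_pos hsy 2) (mul_pos hyHy hsBs) (sub_nonneg.2 hφ.2) hφ.1 (by ring)
  exact ⟨hΔ0, broyden_middle_det_eq hsy.ne' hsBs.ne' hyHy.ne' rfl hΔ0.ne'⟩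

theorem lemma1_det (n : ℕ)
    (B0 H0 : Matrix (Fin n) (Fin n) ℝ)
    (hB0 : B0.PosDef) (hH0 : H0.PosDef) (hinv : H0 = B0⁻¹)
    (s y : Matrix (Fin n) (Fin 1) ℝ)
    (φ : ℝ) (hφ : φ ∈ Set.Icc (0 : ℝ) 1)
    (hsy : (sᵀ * y) 0 0 > 0) :
    let sty := (sᵀ * y) 0 0
    let sBs := (sᵀ * B0 * s) 0 0
    let yHy := (yᵀ * H0 * y) 0 0
    let Δ0 := (1 - φ) * sty ^ 2 + φ * yHy * sBs
    let Φ0 := (1 - φ) * sty ^ 2 / Δ0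
    let α := 1 / sty + Φ0 * yHy / sty ^ 2
    let β := -(Φ0 / sty)
    let δ := -((1 - Φ0) / yHy)
    let lam0 := 1 / (-((1 - φ) / sBs) - φ / sty)
    Δ0 > 0 ∧ α * δ - β ^ 2 = (1 / Δ0) * (sBs / lam0) :=
  lemma1_det_general n B0 H0 hB0 hH0 s y φ hφ hsy
end

section
/- With the setup of Lemma 1 (s^T y > 0, B0, H0 = B0^{-1} symmetric positive definite, φ ∈ [0,1], Δ0, Φ0, λ0, α̃, β̃, δ̃ as defined), the inverse of the 2×2 matrix [[α̃, β̃],[β̃, δ̃]] equals [[-φ λ0, -s^T y - φ λ0],[-s^T y - φ λ0, -s^T y - φ λ0 - y^T H0 y]], provided α̃ δ̃ - β̃² ≠ 0. -/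
/-! The determinant of `!![α̃, β̃; β̃, δ̃]` collapses to `-e / (sᵀy · Δ0)` with
`e = (1 - φ) sᵀy + φ sᵀB0s`, and `λ0 = -(sᵀB0s · sᵀy) / e`. Both `Δ0` and `e` are convex
combinations of the positive numbers `sᵀy`, `sᵀB0s`, `yᵀH0y` (the last two are positive
because `B0`, `H0` are positive definite and `s, y ≠ 0`, as `sᵀy > 0`), so the adjugate
formula for the inverse can be compared entrywise with the claimed matrix. -/

open Matrix

theorem one_sub_mul_add_mul_pos {a c φ : ℝ} (ha : 0 < a) (hc : 0 < c)
    (hφ : φ ∈ Set.Icc (0 : ℝ) 1) : 0 < (1 - φ) * a + φ * c :=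
  convex_Ioi (0 : ℝ) ha hc (sub_nonneg.2 hφ.2) hφ.1 (sub_add_cancel 1 φ)

theorem inv_compact_coeffs {t b h φ Φ α β δ lam : ℝ} (ht : 0 < t) (hb : 0 < b) (hh : 0 < h)
    (hφ : φ ∈ Set.Icc (0 : ℝ) 1)
    (hΦ : Φ = (1 - φ) * t ^ 2 / ((1 - φ) * t ^ 2 + φ * h * b))
    (hα : α = 1 / t + Φ * h / t ^ 2) (hβ : β = -(Φ / t)) (hδ : δ = -((1 - Φ) / h))
    (hlam : lam = 1 / (-((1 - φ) / b) - φ / t)) :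
    (!![α, β; β, δ])⁻¹ = !![-(φ * lam), -t - φ * lam; -t - φ * lam, -t - φ * lam - h] := by
  have hΔ : 0 < (1 - φ) * t ^ 2 + φ * h * b := by
    simpa only [mul_assoc] using one_sub_mul_add_mul_pos (pow_pos ht 2) (mul_pos hh hb) hφ
  have he : 0 < (1 - φ) * t + φ * b := one_sub_mul_add_mul_pos ht hb hφ
  set Δ := (1 - φ) * t ^ 2 + φ * h * b with hΔ_def
  set e := (1 - φ) * t + φ * b with he_def
  clear_value Δ e
  have hlam' : lam = -(b * t) / e := by
    have : -((1 - φ) / b) - φ / t = -e / (b * t) := by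
      rw [he_def]
      field_simp
      ring
    rw [hlam, this, one_div_div, div_neg, neg_div]
  have hdet : α * δ - β * β = -e / (t * Δ) := by
    subst hα hβ hδ hΦ
    field_simp
    subst hΔ_def he_def
    ring
  rw [inv_def, det_fin_two_of, adjugate_fin_two_of, hdet, Ring.inverse_eq_inv]
  subst hΦ hα hβ hδ hlam'
  ext i j
  fin_cases i <;> fin_cases j <;>
    simp only [Fin.zero_eta, Fin.mk_one, Fin.isValue, Matrix.smul_apply, of_apply, cons_val',
      cons_val_zero, cons_val_one, cons_val_fin_one, smul_eq_mul] <;>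
    field_simp <;> subst hΔ_def he_def <;> ring

theorem Matrix.transpose_mul_mul_apply_self {m n : Type*} [Fintype m]
    (A : Matrix m n ℝ) (M : Matrix m m ℝ) (j : n) :
    (Aᵀ * M * A) j j = (fun i => A i j) ⬝ᵥ (M *ᵥ fun i => A i j) := by
  rw [Matrix.mul_assoc, mul_apply']
  rfl

theorem Matrix.PosDef.transpose_mul_mul_apply_self_pos {m n : Type*} [Fintype m]
    {M : Matrix m m ℝ} (hM : M.PosDef) {A : Matrix m n ℝ} {j : n}
    (hA : (fun i => A i j) ≠ 0) : 0 < (Aᵀ * M * A) j j := by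
  simpa [transpose_mul_mul_apply_self] using hM.dotProduct_mulVec_pos hA

theorem Matrix.col_ne_zero_of_transpose_mul_apply_ne_zero {m n p : Type*} [Fintype m]
    {A : Matrix m n ℝ} {B : Matrix m p ℝ} {j : n} {k : p} (h : (Aᵀ * B) j k ≠ 0) :
    (fun i => A i j) ≠ 0 ∧ (fun i => B i k) ≠ 0 := by
  change (fun i => A i j) ⬝ᵥ (fun i => B i k) ≠ 0 at h
  exact ⟨fun hA => h (by rw [hA, zero_dotProduct]), fun hB => h (by rw [hB, dotProduct_zero])⟩

theorem lemma1_inverse_general (n : ℕ)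
    (B0 H0 : Matrix (Fin n) (Fin n) ℝ)
    (hB0 : B0.PosDef) (hH0 : H0.PosDef)
    (s y : Matrix (Fin n) (Fin 1) ℝ)
    (φ : ℝ) (hφ : φ ∈ Set.Icc (0 : ℝ) 1)
    (hsy : (sᵀ * y) 0 0 > 0) :
    let sty := (sᵀ * y) 0 0
    let sBs := (sᵀ * B0 * s) 0 0
    let yHy := (yᵀ * H0 * y) 0 0
    let Δ0 := (1 - φ) * sty ^ 2 + φ * yHy * sBs
    let Φ0 := (1 - φ) * sty ^ 2 / Δ0
    let α := 1 / sty + Φ0 * yHy / sty ^ 2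
    let β := -(Φ0 / sty)
    let δ := -((1 - Φ0) / yHy)
    let lam0 := 1 / (-((1 - φ) / sBs) - φ / sty)
    α * δ - β ^ 2 ≠ 0 →
      (!![α, β; β, δ])⁻¹ =
        !![-(φ * lam0), -sty - φ * lam0;
           -sty - φ * lam0, -sty - φ * lam0 - yHy] := by
  intro sty sBs yHy Δ0 Φ0 α β δ lam0 _
  obtain ⟨hs, hy⟩ := col_ne_zero_of_transpose_mul_apply_ne_zero hsy.ne'
  exact inv_compact_coeffs hsy (hB0.transpose_mul_mul_apply_self_pos hs)
    (hH0.transpose_mul_mul_apply_self_pos hy) hφ rfl rfl rfl rfl rfl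

theorem lemma1_inverse (n : ℕ)
    (B0 H0 : Matrix (Fin n) (Fin n) ℝ)
    (hB0 : B0.PosDef) (hH0 : H0.PosDef) (hinv : H0 = B0⁻¹)
    (s y : Matrix (Fin n) (Fin 1) ℝ)
    (φ : ℝ) (hφ : φ ∈ Set.Icc (0 : ℝ) 1)
    (hsy : (sᵀ * y) 0 0 > 0) :
    let sty := (sᵀ * y) 0 0
    let sBs := (sᵀ * B0 * s) 0 0
    let yHy := (yᵀ * H0 * y) 0 0
    let Δ0 := (1 - φ) * sty ^ 2 + φ * yHy * sBs
    let Φ0 := (1 - φ) * sty ^ 2 / Δ0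
    let α := 1 / sty + Φ0 * yHy / sty ^ 2
    let β := -(Φ0 / sty)
    let δ := -((1 - Φ0) / yHy)
    let lam0 := 1 / (-((1 - φ) / sBs) - φ / sty)
    α * δ - β ^ 2 ≠ 0 →
      (!![α, β; β, δ])⁻¹ =
        !![-(φ * lam0), -sty - φ * lam0;
           -sty - φ * lam0, -sty - φ * lam0 - yHy] :=
  lemma1_inverse_general n B0 H0 hB0 hH0 s y φ hφ hsy
end

section
/- Let M be an invertible m×m matrix, N an invertible 2×2 matrix, and u ∈ R^m. Define the (m+2)×(m+2) block matrix M̄ = [[M + δ u u^T, β u, δ u],[β u^T, α, β],[δ u^T, β, δ]] where N = [[α, β],[β, δ]]. Then M̄ factors as E diag(M, N) E^T where E = [[I_m, 0, u],[0, 1, 0],[0, 0, 1]], and hence M̄ is invertible with M̄^{-1} = E^{-T} diag(M^{-1}, N^{-1}) E^{-1}, where E^{-1} = [[I_m, 0, -u],[0, 1, 0],[0, 0, 1]]. -/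
open Matrix

theorem block_factorization (m : ℕ)
    (M : Matrix (Fin m) (Fin m) ℝ) (hM : IsUnit M.det)
    (α β δ : ℝ) (u : Matrix (Fin m) (Fin 1) ℝ)
    (N : Matrix (Fin 2) (Fin 2) ℝ) (hN : N = !![α, β; β, δ])
    (hNinv : IsUnit N.det) :
    let Mbar : Matrix (Fin m ⊕ Fin 2) (Fin m ⊕ Fin 2) ℝ :=
      fromBlocks (M + δ • (u * uᵀ)) (u * (!![β, δ] : Matrix (Fin 1) (Fin 2) ℝ)) ((!![β; δ] : Matrix (Fin 2) (Fin 1) ℝ) * uᵀ) N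
    let E : Matrix (Fin m ⊕ Fin 2) (Fin m ⊕ Fin 2) ℝ :=
      fromBlocks 1 (u * (!![0, 1] : Matrix (Fin 1) (Fin 2) ℝ)) 0 1
    let Einv : Matrix (Fin m ⊕ Fin 2) (Fin m ⊕ Fin 2) ℝ :=
      fromBlocks 1 (u * (!![0, -1] : Matrix (Fin 1) (Fin 2) ℝ)) 0 1
    Mbar = E * fromBlocks M 0 0 N * Eᵀ ∧
    E * Einv = 1 ∧
    IsUnit Mbar.det ∧
    Mbar⁻¹ = Einvᵀ * fromBlocks M⁻¹ 0 0 N⁻¹ * Einv := by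
  intro Mbar E Einv
  have e1 : (!![0, 1] : Matrix (Fin 1) (Fin 2) ℝ) * N = !![β, δ] := by
    subst hN; ext i j; fin_cases i <;> fin_cases j <;>
      simp [Matrix.mul_apply, Fin.sum_univ_succ]
  have e2 : (!![β, δ] : Matrix (Fin 1) (Fin 2) ℝ) * (!![0; 1] : Matrix (Fin 2) (Fin 1) ℝ) = !![δ] := by
    ext i j; fin_cases i; fin_cases j; simp [Matrix.mul_apply, Fin.sum_univ_succ]
  have e3 : N * (!![0; 1] : Matrix (Fin 2) (Fin 1) ℝ) = !![β; δ] := by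
    subst hN; ext i j; fin_cases i <;> fin_cases j <;>
      simp [Matrix.mul_apply, Fin.sum_univ_succ]
  have e4 : (!![0, 1] : Matrix (Fin 1) (Fin 2) ℝ)ᵀ = !![0; 1] := by
    ext i j; fin_cases i <;> fin_cases j <;> simp
  have e5 : (!![0, -1] : Matrix (Fin 1) (Fin 2) ℝ) + (!![0, 1] : Matrix (Fin 1) (Fin 2) ℝ) = 0 := by
    ext i j; fin_cases i <;> fin_cases j <;> simp
  have e5' : (!![0, 1] : Matrix (Fin 1) (Fin 2) ℝ) + (!![0, -1] : Matrix (Fin 1) (Fin 2) ℝ) = 0 := by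
    ext i j; fin_cases i <;> fin_cases j <;> simp
  have hdel : u * (!![δ] : Matrix (Fin 1) (Fin 1) ℝ) * uᵀ = δ • (u * uᵀ) := by
    have h : (!![δ] : Matrix (Fin 1) (Fin 1) ℝ) = δ • 1 := by
      ext i j; fin_cases i; fin_cases j; simp
    rw [h, Matrix.mul_smul, Matrix.mul_one, Matrix.smul_mul]
  have hED : E * fromBlocks M 0 0 N = fromBlocks M (u * !![β, δ]) 0 N := by
    show fromBlocks 1 (u * (!![0, 1] : Matrix (Fin 1) (Fin 2) ℝ)) 0 1 * fromBlocks M 0 0 N = _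
    rw [Matrix.fromBlocks_multiply]
    simp only [Matrix.one_mul, Matrix.mul_one, Matrix.mul_zero, Matrix.zero_mul,
      add_zero, zero_add, Matrix.mul_assoc, e1]
  have hfact : Mbar = E * fromBlocks M 0 0 N * Eᵀ := by
    show Mbar = E * fromBlocks M 0 0 N * Eᵀ
    rw [hED]
    show Mbar = _ * (fromBlocks 1 (u * (!![0, 1] : Matrix (Fin 1) (Fin 2) ℝ)) 0 1)ᵀ
    rw [Matrix.fromBlocks_transpose, Matrix.transpose_one, Matrix.transpose_zero,
      Matrix.transpose_mul, e4, Matrix.fromBlocks_multiply]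
    simp only [Matrix.transpose_one, Matrix.one_mul, Matrix.mul_one, Matrix.mul_zero,
      Matrix.zero_mul, add_zero, zero_add]
    show fromBlocks (M + δ • (u * uᵀ)) (u * !![β, δ]) (!![β; δ] * uᵀ) N = _
    rw [← Matrix.mul_assoc (u * !![β, δ]), Matrix.mul_assoc u, e2, hdel,
      ← Matrix.mul_assoc N, e3]
  have hEEinv : E * Einv = 1 := by
    show fromBlocks 1 (u * (!![0, 1] : Matrix (Fin 1) (Fin 2) ℝ)) 0 1 *
        fromBlocks 1 (u * (!![0, -1] : Matrix (Fin 1) (Fin 2) ℝ)) 0 1 = 1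
    rw [Matrix.fromBlocks_multiply]
    simp only [Matrix.one_mul, Matrix.mul_one, Matrix.mul_zero, Matrix.zero_mul,
      add_zero, zero_add]
    rw [← Matrix.mul_add, e5, Matrix.mul_zero, ← Matrix.fromBlocks_one]
  have hEinvE : Einv * E = 1 := by
    show fromBlocks 1 (u * (!![0, -1] : Matrix (Fin 1) (Fin 2) ℝ)) 0 1 *
        fromBlocks 1 (u * (!![0, 1] : Matrix (Fin 1) (Fin 2) ℝ)) 0 1 = 1
    rw [Matrix.fromBlocks_multiply]
    simp only [Matrix.one_mul, Matrix.mul_one, Matrix.mul_zero, Matrix.zero_mul,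
      add_zero, zero_add]
    rw [← Matrix.mul_add, e5', Matrix.mul_zero, ← Matrix.fromBlocks_one]
  have hEinvdef : E⁻¹ = Einv := inv_eq_right_inv hEEinv
  have hDdet : IsUnit (fromBlocks M 0 0 N).det := by
    rw [Matrix.det_fromBlocks_zero₂₁]; exact hM.mul hNinv
  have hEdet : IsUnit E.det := isUnit_det_of_right_inverse hEEinv
  have hMbardet : IsUnit Mbar.det := by
    rw [hfact, Matrix.det_mul, Matrix.det_mul, Matrix.det_transpose]
    exact (hEdet.mul hDdet).mul hEdet
  have hDinv : (fromBlocks M 0 0 N)⁻¹ = fromBlocks M⁻¹ 0 0 N⁻¹ := by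
    apply inv_eq_right_inv
    rw [Matrix.fromBlocks_multiply]
    simp only [Matrix.mul_zero, Matrix.zero_mul, add_zero, zero_add,
      Matrix.mul_nonsing_inv _ hM, Matrix.mul_nonsing_inv _ hNinv]
    rw [← Matrix.fromBlocks_one]
  refine ⟨hfact, hEEinv, hMbardet, ?_⟩
  rw [hfact, Matrix.mul_inv_rev, Matrix.mul_inv_rev, hDinv, ← Matrix.transpose_nonsing_inv,
    hEinvdef, Matrix.mul_assoc]
end

section
/- Let H0 = γ^{-1} I with γ > 0, and Ψ an n×m matrix (m ≤ n) with QR decomposition Ψ = Q [R1; 0] where Q is n×n orthogonal and R1 is m×m. Let M̃ be a symmetric m×m matrix and R1 M̃ R1^T = V1 D1 V1^T its spectral decomposition. Then H = H0 + Ψ M̃ Ψ^T has eigenvalues γ^{-1} + d_i for i = 1,…,m (d_i the diagonal entries of D1) together with γ^{-1} with multiplicity n - m. -/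
/-!
Since `Q` is orthogonal, `Ψ M Ψᵀ = Q (R₁ M R₁ᵀ ⊕ 0) Qᵀ`, and the spectral decomposition of the
leading block turns this into `P (diag d ⊕ 0) Pᵀ` with the orthogonal matrix
`P = Q (V₁ ⊕ 1)`. The shift `γ⁻¹ • 1` commutes with conjugation by `P`, so
`H = P (γ⁻¹ • 1 + diag d ⊕ 0) Pᵀ`.
-/

open Matrix

namespace Matrix

variable {l m n R : Type*} [CommRing R]

theorem fromRows_zero_mul_mul_transpose [Fintype l] (A : Matrix m l R) (M : Matrix l l R) :
    fromRows A (0 : Matrix n l R) * M * (fromRows A 0)ᵀ =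
      fromBlocks (A * M * Aᵀ) 0 0 (0 : Matrix n n R) := by
  rw [transpose_fromRows, fromRows_mul, fromRows_mul_fromCols]
  simp

variable [Fintype m] [Fintype n]

theorem fromBlocks_zero_zero_mul_mul_transpose (A : Matrix m m R) (B : Matrix n n R)
    (X : Matrix m m R) (Y : Matrix n n R) :
    fromBlocks A 0 0 B * fromBlocks X 0 0 Y * (fromBlocks A 0 0 B)ᵀ =
      fromBlocks (A * X * Aᵀ) 0 0 (B * Y * Bᵀ) := by
  simp [fromBlocks_transpose, fromBlocks_multiply]

variable [DecidableEq m] [DecidableEq n]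

theorem fromBlocks_mem_orthogonalGroup {A : Matrix m m R} {B : Matrix n n R}
    (hA : A ∈ orthogonalGroup m R) (hB : B ∈ orthogonalGroup n R) :
    fromBlocks A 0 0 B ∈ orthogonalGroup (m ⊕ n) R := by
  rw [mem_orthogonalGroup_iff] at hA hB ⊢
  simp [fromBlocks_transpose, fromBlocks_multiply, hA, hB]

theorem smul_one_add_conj_of_mem_orthogonalGroup {P : Matrix n n R}
    (hP : P ∈ orthogonalGroup n R) (c : R) (A : Matrix n n R) :
    c • 1 + P * A * Pᵀ = P * (c • 1 + A) * Pᵀ := by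
  rw [mul_add, add_mul, Matrix.mul_smul, mul_one, smul_mul, (mem_orthogonalGroup_iff n R).mp hP]

end Matrix

theorem compact_inverse_eigenvalues_general (m p : ℕ) (γ : ℝ)
    (Q : Matrix (Fin m ⊕ Fin p) (Fin m ⊕ Fin p) ℝ)
    (hQ : Q ∈ Matrix.orthogonalGroup (Fin m ⊕ Fin p) ℝ)
    (R1 : Matrix (Fin m) (Fin m) ℝ)
    (Ψ : Matrix (Fin m ⊕ Fin p) (Fin m) ℝ)
    (hΨ : Ψ = Q * Matrix.fromRows R1 (0 : Matrix (Fin p) (Fin m) ℝ))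
    (M : Matrix (Fin m) (Fin m) ℝ)
    (V1 : Matrix (Fin m) (Fin m) ℝ)
    (hV1 : V1 ∈ Matrix.orthogonalGroup (Fin m) ℝ)
    (d : Fin m → ℝ)
    (hspec : R1 * M * R1ᵀ = V1 * Matrix.diagonal d * V1ᵀ)
    (H : Matrix (Fin m ⊕ Fin p) (Fin m ⊕ Fin p) ℝ)
    (hH : H = γ⁻¹ • (1 : Matrix (Fin m ⊕ Fin p) (Fin m ⊕ Fin p) ℝ) + Ψ * M * Ψᵀ) :
    ∃ P ∈ Matrix.orthogonalGroup (Fin m ⊕ Fin p) ℝ,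
      H = P * Matrix.diagonal
            (Sum.elim (fun i : Fin m => γ⁻¹ + d i) (fun _ : Fin p => γ⁻¹)) * Pᵀ := by
  set B : Matrix (Fin m ⊕ Fin p) (Fin m ⊕ Fin p) ℝ := fromBlocks V1 0 0 1
  have hQB : Q * B ∈ orthogonalGroup (Fin m ⊕ Fin p) ℝ :=
    mul_mem hQ (fromBlocks_mem_orthogonalGroup hV1 (one_mem _))
  have hlowRank : Ψ * M * Ψᵀ = (Q * B) * diagonal (Sum.elim d 0) * (Q * B)ᵀ := by
    have hblock : fromBlocks (R1 * M * R1ᵀ) 0 0 (0 : Matrix (Fin p) (Fin p) ℝ) =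
        B * diagonal (Sum.elim d 0) * Bᵀ := by
      rw [hspec, ← fromBlocks_diagonal, fromBlocks_zero_zero_mul_mul_transpose]
      simp
    calc Ψ * M * Ψᵀ = Q * (fromRows R1 0 * M * (fromRows R1 0)ᵀ) * Qᵀ := by
          rw [hΨ]; simp only [transpose_mul, Matrix.mul_assoc]
      _ = Q * (B * diagonal (Sum.elim d 0) * Bᵀ) * Qᵀ := by
          rw [fromRows_zero_mul_mul_transpose, hblock]
      _ = (Q * B) * diagonal (Sum.elim d 0) * (Q * B)ᵀ := by
          simp only [transpose_mul, Matrix.mul_assoc]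
  have hshift : γ⁻¹ • 1 + diagonal (Sum.elim d 0) =
      diagonal (Sum.elim (fun i : Fin m => γ⁻¹ + d i) (fun _ : Fin p => γ⁻¹)) := by
    rw [smul_one_eq_diagonal, diagonal_add]
    congr 1
    ext (i | j) <;> simp
  refine ⟨Q * B, hQB, ?_⟩
  rw [hH, hlowRank, smul_one_add_conj_of_mem_orthogonalGroup hQB, hshift]

theorem compact_inverse_eigenvalues (m p : ℕ) (γ : ℝ) (hγ : γ > 0)
    (Q : Matrix (Fin m ⊕ Fin p) (Fin m ⊕ Fin p) ℝ)
    (hQ : Q ∈ Matrix.orthogonalGroup (Fin m ⊕ Fin p) ℝ)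
    (R1 : Matrix (Fin m) (Fin m) ℝ)
    (Ψ : Matrix (Fin m ⊕ Fin p) (Fin m) ℝ)
    (hΨ : Ψ = Q * Matrix.fromRows R1 (0 : Matrix (Fin p) (Fin m) ℝ))
    (M : Matrix (Fin m) (Fin m) ℝ) (hMsym : Mᵀ = M)
    (V1 : Matrix (Fin m) (Fin m) ℝ)
    (hV1 : V1 ∈ Matrix.orthogonalGroup (Fin m) ℝ)
    (d : Fin m → ℝ)
    (hspec : R1 * M * R1ᵀ = V1 * Matrix.diagonal d * V1ᵀ)
    (H : Matrix (Fin m ⊕ Fin p) (Fin m ⊕ Fin p) ℝ)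
    (hH : H = γ⁻¹ • (1 : Matrix (Fin m ⊕ Fin p) (Fin m ⊕ Fin p) ℝ) + Ψ * M * Ψᵀ) :
    ∃ P ∈ Matrix.orthogonalGroup (Fin m ⊕ Fin p) ℝ,
      H = P * Matrix.diagonal
            (Sum.elim (fun i : Fin m => γ⁻¹ + d i) (fun _ : Fin p => γ⁻¹)) * Pᵀ :=
  compact_inverse_eigenvalues_general m p γ Q hQ R1 Ψ hΨ M V1 hV1 d hspec H hH
end

section
/- Let H0 be symmetric invertible, S, Y be n×(k+1) matrices with S^T Y = L + D + R as usual, and suppose D̄ = D + R is invertible. Then the BFGS-inverse compact representation H = H0 + [S, H0 Y] [[D̄^{-T}(D + Y^T H0 Y) D̄^{-1}, -D̄^{-T}],[-D̄^{-1}, 0]] [S, H0 Y]^T can equivalently be written as H = H0 - [H0 Y, S] [[Y^T H0 Y + D, D̄^T],[D̄, 0]]^{-1} [H0 Y, S]^T, assuming the indicated 2×2 block matrix is invertible. -/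
open Matrix

/-!
For any `A`, the block matrix `K = [[A, D̄ᵀ], [D̄, 0]]` with `D̄` invertible has the explicit inverse
`[[0, D̄⁻¹], [D̄⁻ᵀ, -D̄⁻ᵀ A D̄⁻¹]]`. Swapping both the block rows and the block columns of `-K⁻¹`
gives, for `A = Yᵀ H0 Y + D`, exactly the middle matrix of the first representation, and this swap
is absorbed by reordering `[H0 Y, S]` into `[S, H0 Y]`.
-/

namespace Matrix

variable {l m n m' n' p α : Type*}

theorem fromCols_mul_fromBlocks_mul_fromRows [Fintype m] [Fintype n] [Fintype m'] [Fintype n']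
    [Semiring α] (P : Matrix l m α) (Q : Matrix l n α) (A : Matrix m m' α) (B : Matrix m n' α)
    (C : Matrix n m' α) (D : Matrix n n' α) (P' : Matrix m' p α) (Q' : Matrix n' p α) :
    fromCols P Q * fromBlocks A B C D * fromRows P' Q' =
      P * A * P' + P * B * Q' + (Q * C * P' + Q * D * Q') := by
  rw [fromCols_mul_fromBlocks, fromCols_mul_fromRows]
  simp only [Matrix.add_mul, Matrix.mul_assoc]
  abel

theorem inv_fromBlocks_zero₂₂ [Fintype m] [DecidableEq m] [CommRing α]
    (A B C : Matrix m m α) (hB : IsUnit B.det) (hC : IsUnit C.det) :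
    (fromBlocks A B C 0)⁻¹ = fromBlocks 0 C⁻¹ B⁻¹ (-(B⁻¹ * A * C⁻¹)) := by
  apply inv_eq_right_inv
  rw [fromBlocks_multiply, mul_nonsing_inv B hB, mul_nonsing_inv C hC, Matrix.mul_neg,
    ← Matrix.mul_assoc, ← Matrix.mul_assoc, mul_nonsing_inv B hB, Matrix.one_mul]
  simp [fromBlocks_one]

end Matrix

theorem bfgs_dfp_duality_general (n k : ℕ)
    (H0 : Matrix (Fin n) (Fin n) ℝ)
    (S Y : Matrix (Fin n) (Fin (k + 1)) ℝ)
    (D R : Matrix (Fin (k + 1)) (Fin (k + 1)) ℝ)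
    (hDbar : IsUnit (D + R).det) :
    let Dbar := D + R
    let Ψ1 := fromCols S (H0 * Y)
    let Mid : Matrix (Fin (k + 1) ⊕ Fin (k + 1)) (Fin (k + 1) ⊕ Fin (k + 1)) ℝ :=
      fromBlocks ((Dbar⁻¹)ᵀ * (D + Yᵀ * H0 * Y) * Dbar⁻¹) (-(Dbar⁻¹)ᵀ) (-Dbar⁻¹) 0
    let Ψ2 := fromCols (H0 * Y) S
    let K : Matrix (Fin (k + 1) ⊕ Fin (k + 1)) (Fin (k + 1) ⊕ Fin (k + 1)) ℝ :=
      fromBlocks (Yᵀ * H0 * Y + D) Dbarᵀ Dbar 0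
    H0 + Ψ1 * Mid * Ψ1ᵀ = H0 - Ψ2 * K⁻¹ * Ψ2ᵀ := by
  intro Dbar Ψ1 Mid Ψ2 K
  have hDbarT : IsUnit Dbarᵀ.det := by rwa [det_transpose]
  rw [inv_fromBlocks_zero₂₂ _ _ _ hDbarT hDbar, ← transpose_nonsing_inv, transpose_fromCols,
    transpose_fromCols, fromCols_mul_fromBlocks_mul_fromRows,
    fromCols_mul_fromBlocks_mul_fromRows, add_comm (Yᵀ * H0 * Y) D]
  simp only [Matrix.mul_zero, Matrix.zero_mul, Matrix.mul_neg, Matrix.neg_mul, add_zero,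
    zero_add]
  abel

theorem bfgs_dfp_duality (n k : ℕ)
    (H0 : Matrix (Fin n) (Fin n) ℝ) (hH0sym : H0ᵀ = H0) (hH0 : IsUnit H0.det)
    (S Y : Matrix (Fin n) (Fin (k + 1)) ℝ)
    (L D R : Matrix (Fin (k + 1)) (Fin (k + 1)) ℝ)
    (hL : ∀ i j, ¬ j < i → L i j = 0)
    (hD : ∀ i j, i ≠ j → D i j = 0)
    (hR : ∀ i j, ¬ i < j → R i j = 0)
    (hdec : Sᵀ * Y = L + D + R)
    (hDbar : IsUnit (D + R).det)
    (hK : IsUnit (fromBlocks (Yᵀ * H0 * Y + D) (D + R)ᵀ (D + R)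
            (0 : Matrix (Fin (k + 1)) (Fin (k + 1)) ℝ)).det) :
    let Dbar := D + R
    let Ψ1 := fromCols S (H0 * Y)
    let Mid : Matrix (Fin (k + 1) ⊕ Fin (k + 1)) (Fin (k + 1) ⊕ Fin (k + 1)) ℝ :=
      fromBlocks ((Dbar⁻¹)ᵀ * (D + Yᵀ * H0 * Y) * Dbar⁻¹) (-(Dbar⁻¹)ᵀ) (-Dbar⁻¹) 0
    let Ψ2 := fromCols (H0 * Y) S
    let K : Matrix (Fin (k + 1) ⊕ Fin (k + 1)) (Fin (k + 1) ⊕ Fin (k + 1)) ℝ :=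
      fromBlocks (Yᵀ * H0 * Y + D) Dbarᵀ Dbar 0
    H0 + Ψ1 * Mid * Ψ1ᵀ = H0 - Ψ2 * K⁻¹ * Ψ2ᵀ :=
  bfgs_dfp_duality_general n k H0 S Y D R hDbar
end
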